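/- arXiv:0706.3623 — 2 statements merged into one kernel-verified Lean document; each statement's English description precedes it below -/
import Mathlib

section
/- Let Γ be a group, H a complex inner product space, and ξ, η : Γ → H functions with ‖ξ(a)‖ ≤ 1 and ‖η(b)‖ ≤ 1 for all a, b ∈ Γ. Let f : Γ → ℂ be a function satisfying f(a b⁻¹) = ⟨η(b), ξ(a)⟩ for all a, b ∈ Γ. Then for every g, a ∈ Γ one has ‖ξ(g a) − ξ(a)‖² ≤ 2(2 − 2 Re f(g)) + 2(2 − 2 Re f(1)). -/
open scoped InnerProductSpace

theorem norm_sub_sq_le_two_sub_two_re_inner {𝕜 E : Type*} [RCLike 𝕜] [NormedAddCommGroup E]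
    [InnerProductSpace 𝕜 E] {u v : E} (hu : ‖u‖ ≤ 1) (hv : ‖v‖ ≤ 1) :
    ‖u - v‖ ^ 2 ≤ 2 - 2 * RCLike.re ⟪v, u⟫_𝕜 := by
  rw [norm_sub_sq (𝕜 := 𝕜), inner_re_symm]
  have hu2 : ‖u‖ ^ 2 ≤ 1 := pow_le_one₀ (norm_nonneg u) hu
  have hv2 : ‖v‖ ^ 2 ≤ 1 := pow_le_one₀ (norm_nonneg v) hv
  linarith

theorem norm_sub_sq_le_two_mul_add {E : Type*} [SeminormedAddCommGroup E] (u v w : E) :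
    ‖u - w‖ ^ 2 ≤ 2 * ‖u - v‖ ^ 2 + 2 * ‖v - w‖ ^ 2 :=
  calc ‖u - w‖ ^ 2 ≤ (‖u - v‖ + ‖v - w‖) ^ 2 := by
        gcongr; exact norm_sub_le_norm_sub_add_norm_sub u v w
    _ ≤ 2 * ‖u - v‖ ^ 2 + 2 * ‖v - w‖ ^ 2 := by linarith [add_sq_le (a := ‖u - v‖) (b := ‖v - w‖)]

/-- Let `Γ` be a group, `H` a complex inner product space, and `ξ, η : Γ → H`
with `‖ξ a‖ ≤ 1`, `‖η b‖ ≤ 1` for all `a, b`. Let `f : Γ → ℂ` satisfy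
`f (a * b⁻¹) = ⟪η b, ξ a⟫` for all `a, b`. Then for all `g, a`,
`‖ξ (g * a) − ξ a‖² ≤ 2 (2 − 2 Re f g) + 2 (2 − 2 Re f 1)`. -/
theorem bozejko_fendler_estimate {Γ : Type*} [Group Γ]
    {H : Type*} [NormedAddCommGroup H] [InnerProductSpace ℂ H]
    (ξ η : Γ → H) (hξ : ∀ a, ‖ξ a‖ ≤ 1) (hη : ∀ b, ‖η b‖ ≤ 1)
    (f : Γ → ℂ) (hf : ∀ a b : Γ, f (a * b⁻¹) = inner ℂ (η b) (ξ a))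
    (g a : Γ) :
    ‖ξ (g * a) - ξ a‖ ^ 2 ≤
      2 * (2 - 2 * (f g).re) + 2 * (2 - 2 * (f 1).re) := by
  have hfg : f g = ⟪η a, ξ (g * a)⟫_ℂ := by simpa using hf (g * a) a
  have hf1 : f 1 = ⟪η a, ξ a⟫_ℂ := by simpa using hf a a
  calc ‖ξ (g * a) - ξ a‖ ^ 2 ≤ 2 * ‖ξ (g * a) - η a‖ ^ 2 + 2 * ‖η a - ξ a‖ ^ 2 :=
        norm_sub_sq_le_two_mul_add _ _ _
    _ ≤ 2 * (2 - 2 * (f g).re) + 2 * (2 - 2 * (f 1).re) := by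
        rw [norm_sub_rev (η a), hfg, hf1]
        gcongr <;> exact norm_sub_sq_le_two_sub_two_re_inner (𝕜 := ℂ) (hξ _) (hη _)
end

section
/- Let d ≥ 2, let Γ be a subgroup of SL(d, ℤ), and for each positive integer N let Γ_N = Γ ∩ ker(π_N), where π_N : SL(d, ℤ) → SL(d, ℤ/Nℤ) is entrywise reduction modulo N. Then for all positive integers m and n, with k = gcd(m, n) and l = lcm(m, n), the index in Γ of the subgroup Γ_m Γ_n generated by Γ_m and Γ_n satisfies [Γ : Γ_m Γ_n] ≤ |SL(d, ℤ/kℤ)| · [SL(d, ℤ/lℤ) : π_l(Γ)]. -/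
/-!
For any subgroups `H, K` of `Γ` one has `[H : H ⊓ K] ≤ [H ⊔ K : K]`, hence
`[Γ : H ⊔ K] · [Γ : H ⊓ K] ≤ [Γ : H] · [Γ : K]`. Apply this to `H = Γ_m`, `K = Γ_n`, where
`H ⊓ K = Γ_l` and `[Γ : Γ_N] = |π_N(Γ)|`. Bound `|π_m(Γ)| · |π_n(Γ)|` by `|SL(d, ℤ/m)| · |SL(d, ℤ/n)|`,
which equals `|SL(d, ℤ/k)| · |SL(d, ℤ/l)|` because `N ↦ |SL(d, ℤ/N)|` is multiplicative by the
Chinese remainder theorem, and write `|SL(d, ℤ/l)| = |π_l(Γ)| · [SL(d, ℤ/l) : π_l(Γ)]`.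
-/

open Matrix

namespace Subgroup

variable {G : Type*} [Group G]

theorem relIndex_sup_mul_relIndex_inf_le {H K L : Subgroup G} (hHL : H ≤ L) (hKL : K ≤ L) :
    (H ⊔ K).relIndex L * (H ⊓ K).relIndex L ≤ H.relIndex L * K.relIndex L := by
  rcases eq_or_ne ((H ⊓ K).relIndex L) 0 with h | h
  · simp [h]
  have hJL : H ⊔ K ≤ L := sup_le hHL hKL
  have hK : K.relIndex (H ⊔ K) * (H ⊔ K).relIndex L = K.relIndex L :=
    relIndex_mul_relIndex _ _ _ le_sup_right hJL
  have hKJ : K.relIndex (H ⊔ K) ≠ 0 := fun h0 =>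
    h (relIndex_eq_zero_of_le_left inf_le_right (by rw [← hK, h0, zero_mul]))
  have hHK : K.relIndex H ≤ K.relIndex (H ⊔ K) := relIndex_le_of_le_right le_sup_left hKJ
  calc (H ⊔ K).relIndex L * (H ⊓ K).relIndex L
      = (H ⊔ K).relIndex L * K.relIndex H * H.relIndex L := by
        rw [← relIndex_mul_relIndex _ _ _ inf_le_left hHL, inf_relIndex_left, mul_assoc]
    _ ≤ (H ⊔ K).relIndex L * K.relIndex (H ⊔ K) * H.relIndex L := by gcongr
    _ = H.relIndex L * K.relIndex L := by rw [← hK]; ring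

theorem relIndex_inf_ker {G' : Type*} [Group G'] (L : Subgroup G) (f : G →* G') :
    (L ⊓ f.ker).relIndex L = Nat.card (L.map f) := by
  rw [inf_comm, inf_relIndex_right, relIndex_ker]

end Subgroup

namespace Matrix.SpecialLinearGroup

variable {n : Type*} [Fintype n] [DecidableEq n] {R S : Type*} [CommRing R] [CommRing S]

theorem card_eq_of_ringEquiv (e : R ≃+* S) :
    Nat.card (SpecialLinearGroup n R) = Nat.card (SpecialLinearGroup n S) :=
  Nat.card_congr
    { toFun := map e.toRingHom
      invFun := map e.symm.toRingHom
      left_inv g := by ext; simp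
      right_inv g := by ext; simp }

theorem card_prod :
    Nat.card (SpecialLinearGroup n (R × S)) =
      Nat.card (SpecialLinearGroup n R) * Nat.card (SpecialLinearGroup n S) := by
  rw [← Nat.card_prod]
  refine Nat.card_eq_of_bijective ((map (RingHom.fst R S)).prod (map (RingHom.snd R S)))
    ⟨fun g h hgh => ?_, fun p => ?_⟩
  · ext i j
    · exact congr_arg (fun q => q.1 i j) hgh
    · exact congr_arg (fun q => q.2 i j) hgh
  · let A : Matrix n n (R × S) := of fun i j => (p.1 i j, p.2 i j)
    have hfst : (RingHom.fst R S).mapMatrix A = p.1 := rfl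
    have hsnd : (RingHom.snd R S).mapMatrix A = p.2 := rfl
    have hA : A.det = 1 := Prod.ext
      ((RingHom.map_det (RingHom.fst R S) A).trans (hfst ▸ p.1.prop))
      ((RingHom.map_det (RingHom.snd R S) A).trans (hsnd ▸ p.2.prop))
    exact ⟨⟨A, hA⟩, rfl⟩

theorem card_zmod_mul_of_coprime {a b : ℕ} (h : a.Coprime b) :
    Nat.card (SpecialLinearGroup n (ZMod (a * b))) =
      Nat.card (SpecialLinearGroup n (ZMod a)) * Nat.card (SpecialLinearGroup n (ZMod b)) := by
  rw [card_eq_of_ringEquiv (ZMod.chineseRemainder h), card_prod]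

theorem card_zmod_one : Nat.card (SpecialLinearGroup n (ZMod 1)) = 1 :=
  Nat.card_eq_one_iff_unique.2 ⟨⟨fun _ _ => Subtype.ext (Subsingleton.elim _ _)⟩, ⟨1⟩⟩

theorem card_zmod_gcd_mul_card_zmod_lcm (a b : ℕ) :
    Nat.card (SpecialLinearGroup n (ZMod (a.gcd b))) *
        Nat.card (SpecialLinearGroup n (ZMod (a.lcm b))) =
      Nat.card (SpecialLinearGroup n (ZMod a)) * Nat.card (SpecialLinearGroup n (ZMod b)) := by
  rcases eq_or_ne a 0 with rfl | ha
  · rw [Nat.gcd_zero_left, Nat.lcm_zero_left, mul_comm]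
  rcases eq_or_ne b 0 with rfl | hb
  · rw [Nat.gcd_zero_right, Nat.lcm_zero_right]
  -- `ZMod 0 = ℤ`: the cardinality must be cut off at `0` to give an arithmetic function
  let f : ArithmeticFunction ℕ :=
    ⟨fun N => if N = 0 then 0 else Nat.card (SpecialLinearGroup n (ZMod N)), if_pos rfl⟩
  have hf (N : ℕ) (hN : N ≠ 0) : f N = Nat.card (SpecialLinearGroup n (ZMod N)) := if_neg hN
  have hmul : f.IsMultiplicative := by
    refine ⟨(hf 1 one_ne_zero).trans card_zmod_one, fun {x y} hxy => ?_⟩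
    rcases eq_or_ne x 0 with rfl | hx
    · simp
    rcases eq_or_ne y 0 with rfl | hy
    · simp
    rw [hf _ (mul_ne_zero hx hy), hf x hx, hf y hy, card_zmod_mul_of_coprime hxy]
  have := hmul.lcm_apply_mul_gcd_apply (x := a) (y := b)
  rwa [hf _ (Nat.lcm_ne_zero ha hb), hf _ (Nat.gcd_ne_zero_left ha), hf a ha, hf b hb,
    mul_comm] at this

theorem mem_ker_map_intCast_iff (N : ℕ) (g : SpecialLinearGroup n ℤ) :
    g ∈ (map (n := n) (Int.castRingHom (ZMod N))).ker ↔
      ∀ i j, (N : ℤ) ∣ g i j - (1 : Matrix n n ℤ) i j := by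
  simp only [MonoidHom.mem_ker, SpecialLinearGroup.ext_iff, ← ZMod.intCast_eq_intCast_iff_dvd_sub]
  refine forall₂_congr fun i j => ?_
  rw [eq_comm]
  by_cases hij : i = j <;> simp [one_apply, hij]

theorem ker_map_intCast_lcm (a b : ℕ) :
    (map (n := n) (Int.castRingHom (ZMod (a.lcm b)))).ker =
      (map (n := n) (Int.castRingHom (ZMod a))).ker ⊓
        (map (n := n) (Int.castRingHom (ZMod b))).ker := by
  ext g
  simp only [Subgroup.mem_inf, mem_ker_map_intCast_iff, Int.natCast_dvd, Nat.lcm_dvd_iff,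
    ← forall_and]

end Matrix.SpecialLinearGroup

open Matrix.SpecialLinearGroup Subgroup

theorem index_join_congruence_subgroups_le_general (d : ℕ)
    (Γ : Subgroup (Matrix.SpecialLinearGroup (Fin d) ℤ))
    (m n : ℕ) (hm : 0 < m) (hn : 0 < n) :
    ((Γ ⊓ (Matrix.SpecialLinearGroup.map (n := Fin d) (Int.castRingHom (ZMod m))).ker) ⊔
      (Γ ⊓ (Matrix.SpecialLinearGroup.map (n := Fin d) (Int.castRingHom (ZMod n))).ker)).relIndex Γ ≤
    Nat.card (Matrix.SpecialLinearGroup (Fin d) (ZMod (Nat.gcd m n))) *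
      (Γ.map (Matrix.SpecialLinearGroup.map (n := Fin d)
        (Int.castRingHom (ZMod (Nat.lcm m n))))).index := by
  have : NeZero m := ⟨hm.ne'⟩
  have : NeZero n := ⟨hn.ne'⟩
  have : NeZero (m.lcm n) := ⟨Nat.lcm_ne_zero hm.ne' hn.ne'⟩
  have key := relIndex_sup_mul_relIndex_inf_le
    (inf_le_left : Γ ⊓ (map (n := Fin d) (Int.castRingHom (ZMod m))).ker ≤ Γ)
    (inf_le_left : Γ ⊓ (map (n := Fin d) (Int.castRingHom (ZMod n))).ker ≤ Γ)
  rw [← inf_inf_distrib_left, ← ker_map_intCast_lcm, relIndex_inf_ker, relIndex_inf_ker,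
    relIndex_inf_ker] at key
  refine Nat.le_of_mul_le_mul_right (key.trans ?_) Nat.card_pos
  calc _ ≤ Nat.card (SpecialLinearGroup (Fin d) (ZMod m)) *
          Nat.card (SpecialLinearGroup (Fin d) (ZMod n)) :=
      Nat.mul_le_mul (card_le_card_group _) (card_le_card_group _)
    _ = _ := by
      rw [← card_zmod_gcd_mul_card_zmod_lcm, ← card_mul_index (Γ.map (map (n := Fin d)
        (Int.castRingHom (ZMod (m.lcm n)))))]
      ring

/-- Let `d ≥ 2`, `Γ ≤ SL(d, ℤ)`, and `Γ_N = Γ ∩ ker π_N` where `π_N` is entrywise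
reduction mod `N`. Then for positive `m, n`, with `k = gcd(m,n)` and `l = lcm(m,n)`,
`[Γ : Γ_m Γ_n] ≤ |SL(d, ℤ/kℤ)| · [SL(d, ℤ/lℤ) : π_l(Γ)]`. -/
theorem index_join_congruence_subgroups_le (d : ℕ) (hd : 2 ≤ d)
    (Γ : Subgroup (Matrix.SpecialLinearGroup (Fin d) ℤ))
    (m n : ℕ) (hm : 0 < m) (hn : 0 < n) :
    ((Γ ⊓ (Matrix.SpecialLinearGroup.map (n := Fin d) (Int.castRingHom (ZMod m))).ker) ⊔
      (Γ ⊓ (Matrix.SpecialLinearGroup.map (n := Fin d) (Int.castRingHom (ZMod n))).ker)).relIndex Γ ≤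
    Nat.card (Matrix.SpecialLinearGroup (Fin d) (ZMod (Nat.gcd m n))) *
      (Γ.map (Matrix.SpecialLinearGroup.map (n := Fin d)
        (Int.castRingHom (ZMod (Nat.lcm m n))))).index :=
  index_join_congruence_subgroups_le_general d Γ m n hm hn
end
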